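/- Suppose d_i : S_{-i} → ℝ (i = 1,…,n) satisfy, for every s ∈ S and every i ∈ {2,…,n}, w_1(s_{-1}) d_i(s_{-i}) − w_i(s_{-i}) d_1(s_{-1}) = w_1(s_{-1}) c_i(s) − w_i(s_{-i}) c_1(s). Then the function P : S → ℝ defined by P(s) := (c_1(s) − d_1(s_{-1})) / w_1(s_{-1}) is a coset weighted potential function for c with respect to w; that is, for every i, all x, y ∈ S_i and every s_{-i}: c_i(x,s_{-i}) − c_i(y,s_{-i}) = w_i(s_{-i})(P(x,s_{-i}) − P(y,s_{-i})). -/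

import Mathlib

/-- `f : S → ℝ` depends only on the strategies of the players other than `i`
(i.e. it is a function of `s_{-i}`). -/
def IndepOf {n : ℕ} {k : Fin n → ℕ} (i : Fin n) (f : (∀ j, Fin (k j)) → ℝ) : Prop :=
  ∀ (s : ∀ j, Fin (k j)) (x : Fin (k i)), f (Function.update s i x) = f s

/-- `P` is a coset weighted potential function for the game `c` with respect to the
coset-depending weights `w`. -/
def IsCWPotentialFn {n : ℕ} {k : Fin n → ℕ} (c w : Fin n → (∀ j, Fin (k j)) → ℝ)
    (P : (∀ j, Fin (k j)) → ℝ) : Prop :=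
  ∀ (i : Fin n) (s : ∀ j, Fin (k j)) (x y : Fin (k i)),
    c i (Function.update s i x) - c i (Function.update s i y)
      = w i s * (P (Function.update s i x) - P (Function.update s i y))

/- Away from player 1, the compatibility condition says `P = (c_i − d_i) / w_i`; since `d_i` and `w_i`
do not depend on `s_i`, a unilateral deviation of player `i` changes `P` by exactly
`Δc_i / w_i`. For player 1 this is the definition of `P` itself. -/

theorem sub_div_eq_sub_div_of_mul_sub_eq {a b a' b' u u' : ℝ} (hu : u ≠ 0) (hu' : u' ≠ 0)
    (h : u * b' - u' * b = u * a' - u' * a) : (a - b) / u = (a' - b') / u' := by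
  rw [div_eq_div_iff hu hu']
  linarith

theorem sub_update_eq_mul_sub_update {n : ℕ} {k : Fin n → ℕ} {i : Fin n}
    {f g v P : (∀ j, Fin (k j)) → ℝ} (hg : IndepOf i g) (hv : IndepOf i v)
    {s : ∀ j, Fin (k j)} (hs : v s ≠ 0) (hP : ∀ t, P t = (f t - g t) / v t) (x y : Fin (k i)) :
    f (Function.update s i x) - f (Function.update s i y)
      = v s * (P (Function.update s i x) - P (Function.update s i y)) := by
  rw [hP, hP, hg, hg, hv, hv]
  field_simp
  ring

/-- **Theorem 3.1, "moreover" part (formula (3.8.0)).** If the functions `d_i` of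
`s_{-i}` satisfy, for every `s ∈ S` and every `i ∈ {2,…,n}`,
`w_1(s_{-1}) d_i(s_{-i}) − w_i(s_{-i}) d_1(s_{-1}) = w_1(s_{-1}) c_i(s) − w_i(s_{-i}) c_1(s)`,
then `P(s) := (c_1(s) − d_1(s_{-1})) / w_1(s_{-1})` is a coset weighted potential
function for `c` w.r.t. `w`. -/
theorem potential_formula (n : ℕ) (hn : 2 ≤ n) (k : Fin n → ℕ)
    (c w : Fin n → (∀ j, Fin (k j)) → ℝ)
    (hw : ∀ i s, 0 < w i s) (hwI : ∀ i, IndepOf i (w i))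
    (d : Fin n → (∀ j, Fin (k j)) → ℝ) (hd : ∀ i, IndepOf i (d i))
    (heq : ∀ (s : ∀ j, Fin (k j)) (i : Fin n), i ≠ ⟨0, by omega⟩ →
      w ⟨0, by omega⟩ s * d i s - w i s * d ⟨0, by omega⟩ s
        = w ⟨0, by omega⟩ s * c i s - w i s * c ⟨0, by omega⟩ s) :
    IsCWPotentialFn c w
      (fun s => (c ⟨0, by omega⟩ s - d ⟨0, by omega⟩ s) / w ⟨0, by omega⟩ s) := by
  intro i s x y
  by_cases hi : i = ⟨0, by omega⟩
  · subst hi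
    exact sub_update_eq_mul_sub_update (hd _) (hwI _) (hw _ s).ne' (fun _ => rfl) x y
  · exact sub_update_eq_mul_sub_update (hd i) (hwI i) (hw i s).ne'
      (fun t => sub_div_eq_sub_div_of_mul_sub_eq (hw _ t).ne' (hw i t).ne' (heq t i hi)) x y
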